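/- arXiv:2109.06414 — 2 statements merged into one kernel-verified Lean document; each statement's English description precedes it below -/
import Mathlib

section
/- Let X be a T1 space with at least two points. Then the radius of the zero divisor graph Γ(C(X)_F) equals 2; in particular, for any x₀ ∈ X, the vertex χ_{x₀} has eccentricity 2. -/
open SimpleGraph

/-- `f` belongs to `C(X)_F` : it is continuous outside some finite set. -/
def CF (X : Type*) [TopologicalSpace X] (f : X → ℝ) : Prop :=
  ∃ F : Set X, F.Finite ∧ ContinuousOn f Fᶜ

/-- `f` is a nonzero zero divisor of the ring `C(X)_F`. -/
def ZD (X : Type*) [TopologicalSpace X] (f : X → ℝ) : Prop :=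
  CF X f ∧ f ≠ 0 ∧ ∃ g : X → ℝ, CF X g ∧ g ≠ 0 ∧ f * g = 0

/-- The vertex set of the zero divisor graph of `C(X)_F`. -/
def Vtx (X : Type*) [TopologicalSpace X] := {f : X → ℝ // ZD X f}

/-- The zero divisor graph `Γ(C(X)_F)`: vertices are the nonzero zero divisors,
`f` and `g` adjacent iff `f ≠ g` and `f * g = 0`. -/
def Γ (X : Type*) [TopologicalSpace X] : SimpleGraph (Vtx X) where
  Adj f g := f ≠ g ∧ (f.1 * g.1 = 0)
  symm := ⟨fun f g ⟨h1, h2⟩ => ⟨h1.symm, by rw [mul_comm] at h2; exact h2⟩⟩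
  loopless := ⟨fun f ⟨h, _⟩ => h rfl⟩

/-- The zero set of a function. -/
def Z {X : Type*} (f : X → ℝ) : Set X := {x | f x = 0}

/-- The characteristic function of a point. -/
noncomputable def chi {X : Type*} (x : X) : X → ℝ := Set.indicator {x} (fun _ => 1)

lemma chi_self {X : Type*} (x : X) : chi x x = 1 := by simp [chi]

lemma chi_ne {X : Type*} {x z : X} (h : z ≠ x) : chi x z = 0 := by
  simp [chi, h]

lemma CF_smul_chi {X : Type*} [TopologicalSpace X] [T1Space X] (c : ℝ) (x : X) :
    CF X (c • chi x) := by
  refine ⟨{x}, Set.finite_singleton x, ?_⟩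
  apply ContinuousOn.congr (continuousOn_const (c := (0:ℝ)))
  intro z hz
  have hzx : z ≠ x := by simpa using hz
  simp [chi_ne hzx]

lemma smul_chi_ne_zero {X : Type*} {c : ℝ} (hc : c ≠ 0) (x : X) :
    c • chi x ≠ (0 : X → ℝ) := by
  intro h
  have := congrFun h x
  simp [chi_self, hc] at this

lemma mul_smul_chi_chi {X : Type*} {x y : X} (h : x ≠ y) (c d : ℝ) :
    (c • chi x) * (d • chi y) = (0 : X → ℝ) := by
  funext z
  simp only [Pi.mul_apply, Pi.smul_apply, Pi.zero_apply, smul_eq_mul]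
  rcases eq_or_ne z x with rfl | hz
  · rw [chi_ne h]; ring
  · rw [chi_ne hz]; ring

lemma ZD_smul_chi {X : Type*} [TopologicalSpace X] [T1Space X] {c : ℝ} (hc : c ≠ 0)
    {x y : X} (hy : y ≠ x) : ZD X (c • chi x) := by
  refine ⟨CF_smul_chi c x, smul_chi_ne_zero hc x, (1:ℝ) • chi y, CF_smul_chi 1 y,
    smul_chi_ne_zero one_ne_zero y, mul_smul_chi_chi (Ne.symm hy) c 1⟩

lemma dist_two {V : Type*} {G : SimpleGraph V} {u w m : V} (hne : u ≠ w)
    (hnadj : ¬ G.Adj u w) (h1 : G.Adj u m) (h2 : G.Adj m w) : G.dist u w = 2 := by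
  have hle : G.dist u w ≤ 2 := by
    simpa using SimpleGraph.dist_le
      (SimpleGraph.Walk.cons h1 (SimpleGraph.Walk.cons h2 SimpleGraph.Walk.nil))
  have hr : G.Reachable u w :=
    ⟨SimpleGraph.Walk.cons h1 (SimpleGraph.Walk.cons h2 SimpleGraph.Walk.nil)⟩
  have h0 : 0 < G.dist u w := hr.pos_dist_of_ne hne
  have h1' : G.dist u w ≠ 1 := fun h => hnadj (SimpleGraph.dist_eq_one_iff_adj.mp h)
  omega

/-- If a T1 space `X` has at least two points, then the radius of `Γ(C(X)_F)` is 2: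
every vertex has eccentricity at least 2, and for any `x₀ ∈ X` the vertex `χ_{x₀}`
has eccentricity exactly 2. -/
theorem stmt17 {X : Type*} [TopologicalSpace X] [T1Space X]
    (h2 : ∃ x y : X, x ≠ y) (x₀ : X) :
    (∀ f : Vtx X, ∃ g : Vtx X, g ≠ f ∧ 2 ≤ (Γ X).dist f g) ∧
      (∃ v : Vtx X, v.1 = chi x₀ ∧
        (∀ g : Vtx X, g ≠ v → (Γ X).Reachable v g ∧ (Γ X).dist v g ≤ 2) ∧
        (∃ g : Vtx X, g ≠ v ∧ (Γ X).dist v g = 2)) := by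
  obtain ⟨a, b, hab⟩ := h2
  have hex : ∀ x : X, ∃ y : X, y ≠ x := by
    intro x
    rcases eq_or_ne a x with rfl | h
    · exact ⟨b, hab.symm⟩
    · exact ⟨a, h⟩
  constructor
  · intro f
    obtain ⟨x, hx⟩ : ∃ x, f.1 x ≠ 0 := by
      by_contra h; push_neg at h; exact f.2.2.1 (funext h)
    obtain ⟨y, hy⟩ := hex x
    set c : ℝ := |f.1 x| + 1 with hc
    have hc0 : c ≠ 0 := by positivity
    have hcf : c ≠ f.1 x := by
      have : f.1 x ≤ |f.1 x| := le_abs_self _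
      intro h; rw [hc] at *; linarith [h ▸ this]
    refine ⟨⟨c • chi x, ZD_smul_chi hc0 hy⟩, ?_, ?_⟩
    · intro h
      have := congrFun (congrArg Subtype.val h) x
      simp only [Pi.smul_apply, smul_eq_mul, chi_self, mul_one] at this
      exact hcf this
    · obtain ⟨k, hkCF, hk0, hfk⟩ := f.2.2.2
      have hkx : k x = 0 := by
        have := congrFun hfk x
        simp only [Pi.mul_apply, Pi.zero_apply] at this
        exact (mul_eq_zero.mp this).resolve_left hx
      have hkZD : ZD X k := ⟨hkCF, hk0, f.1, f.2.1, f.2.2.1, by rw [mul_comm]; exact hfk⟩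
      have hne : f ≠ ⟨c • chi x, ZD_smul_chi hc0 hy⟩ := by
        intro h
        have := congrFun (congrArg Subtype.val h) x
        simp only [Pi.smul_apply, smul_eq_mul, chi_self, mul_one] at this
        exact hcf this.symm
      have hnadj : ¬ (Γ X).Adj f ⟨c • chi x, ZD_smul_chi hc0 hy⟩ := by
        rintro ⟨-, hprod⟩
        have := congrFun hprod x
        simp only [Pi.mul_apply, Pi.smul_apply, smul_eq_mul, chi_self, mul_one,
          Pi.zero_apply] at this
        exact hc0 ((mul_eq_zero.mp this).resolve_left hx)
      have hadj1 : (Γ X).Adj f ⟨k, hkZD⟩ := by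
        refine ⟨?_, hfk⟩
        intro h
        have := congrFun (congrArg Subtype.val h) x
        exact hx (this.trans hkx)
      have hadj2 : (Γ X).Adj ⟨k, hkZD⟩ ⟨c • chi x, ZD_smul_chi hc0 hy⟩ := by
        refine ⟨?_, ?_⟩
        · intro h
          have := congrFun (congrArg Subtype.val h) x
          simp only [Pi.smul_apply, smul_eq_mul, chi_self, mul_one] at this
          exact hc0 (this.symm.trans hkx)
        · funext z
          simp only [Pi.mul_apply, Pi.smul_apply, smul_eq_mul, Pi.zero_apply]
          rcases eq_or_ne z x with rfl | hz
          · rw [hkx]; ring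
          · rw [chi_ne hz]; ring
      have := dist_two hne hnadj hadj1 hadj2
      omega
  · obtain ⟨y, hy⟩ := hex x₀
    have hvZD : ZD X (chi x₀) := by
      have := ZD_smul_chi (c := (1:ℝ)) one_ne_zero hy
      simpa using this
    set v : Vtx X := ⟨chi x₀, hvZD⟩ with hv
    refine ⟨v, rfl, ?_, ?_⟩
    · intro g hg
      by_cases hadj : (Γ X).Adj v g
      · refine ⟨hadj.reachable, ?_⟩
        have := SimpleGraph.dist_eq_one_iff_adj.mpr hadj
        omega
      · have hvg : v ≠ g := fun h => hg h.symm
        have hgx₀ : g.1 x₀ ≠ 0 := by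
          intro h0
          apply hadj
          refine ⟨hvg, ?_⟩
          funext z
          simp only [Pi.mul_apply, Pi.zero_apply]
          rcases eq_or_ne z x₀ with rfl | hz
          · rw [h0]; ring
          · show chi x₀ z * _ = 0; rw [chi_ne hz]; ring
        obtain ⟨k, hkCF, hk0, hgk⟩ := g.2.2.2
        have hkx : k x₀ = 0 := by
          have := congrFun hgk x₀
          simp only [Pi.mul_apply, Pi.zero_apply] at this
          exact (mul_eq_zero.mp this).resolve_left hgx₀
        have hkZD : ZD X k := ⟨hkCF, hk0, g.1, g.2.1, g.2.2.1, by rw [mul_comm]; exact hgk⟩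
        have hadj1 : (Γ X).Adj v ⟨k, hkZD⟩ := by
          refine ⟨?_, ?_⟩
          · intro h
            have h2 : chi x₀ x₀ = k x₀ := congrFun (congrArg Subtype.val h) x₀
            rw [chi_self, hkx] at h2
            exact one_ne_zero h2
          · funext z
            simp only [Pi.mul_apply, Pi.zero_apply]
            rcases eq_or_ne z x₀ with rfl | hz
            · rw [hkx]; ring
            · show chi x₀ z * _ = 0; rw [chi_ne hz]; ring
        have hadj2 : (Γ X).Adj ⟨k, hkZD⟩ g := by
          refine ⟨?_, by rw [mul_comm]; exact hgk⟩
          intro h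
          have := congrFun (congrArg Subtype.val h) x₀
          exact hgx₀ (this ▸ hkx)
        refine ⟨⟨SimpleGraph.Walk.cons hadj1 (SimpleGraph.Walk.cons hadj2 SimpleGraph.Walk.nil)⟩, ?_⟩
        have hle := SimpleGraph.dist_le (SimpleGraph.Walk.cons hadj1 (SimpleGraph.Walk.cons hadj2 SimpleGraph.Walk.nil))
        exact hle
    · have hg2ZD : ZD X ((2:ℝ) • chi x₀) := ZD_smul_chi two_ne_zero hy
      set g : Vtx X := ⟨(2:ℝ) • chi x₀, hg2ZD⟩ with hgdef
      have hvg : v ≠ g := by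
        intro h
        have : chi x₀ x₀ = ((2:ℝ) • chi x₀) x₀ := congrFun (congrArg Subtype.val h) x₀
        simp only [Pi.smul_apply, smul_eq_mul, chi_self, mul_one] at this
        norm_num at this
      have hnadj : ¬ (Γ X).Adj v g := by
        rintro ⟨-, hprod⟩
        have : chi x₀ x₀ * ((2:ℝ) • chi x₀) x₀ = 0 := congrFun hprod x₀
        simp [chi_self] at this
      have hyZD : ZD X ((1:ℝ) • chi y) := ZD_smul_chi one_ne_zero (Ne.symm hy)
      have hadj1 : (Γ X).Adj v ⟨(1:ℝ) • chi y, hyZD⟩ := by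
        refine ⟨?_, ?_⟩
        · intro h
          have : chi x₀ x₀ = ((1:ℝ) • chi y) x₀ := congrFun (congrArg Subtype.val h) x₀
          simp only [Pi.smul_apply, smul_eq_mul, one_mul, chi_self] at this
          rw [chi_ne (Ne.symm hy)] at this
          exact one_ne_zero this
        · have := mul_smul_chi_chi (Ne.symm hy) (1:ℝ) (1:ℝ)
          have h2 := mul_smul_chi_chi (x := x₀) (y := y) (Ne.symm hy) (1:ℝ) (1:ℝ)
          simpa using h2
      have hadj2 : (Γ X).Adj ⟨(1:ℝ) • chi y, hyZD⟩ g := by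
        refine ⟨?_, mul_smul_chi_chi hy 1 2⟩
        intro h
        have : ((1:ℝ) • chi y) y = ((2:ℝ) • chi x₀) y := congrFun (congrArg Subtype.val h) y
        simp only [Pi.smul_apply, smul_eq_mul, one_mul, chi_self] at this
        rw [chi_ne hy] at this
        norm_num at this
      exact ⟨g, Ne.symm hvg, dist_two hvg hnadj hadj1 hadj2⟩
end

section
/- Let X be a T1 space with at least two points. Then Γ(C(X)_F) is not triangulated: there exists a vertex f (namely f = χ_{x₀} for any x₀ ∈ X) and an adjacent vertex g = 1 − χ_{x₀} such that no vertex h is adjacent to both f and g; in particular the edge {f, g} lies in no triangle. -/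
open SimpleGraph

lemma chi_mul {X : Type*} (x₀ : X) : chi x₀ * (1 - chi x₀) = 0 := by
  funext x
  by_cases h : x = x₀ <;>
    simp [chi, Set.indicator, h]

lemma chi_ne_zero {X : Type*} (x₀ : X) : chi x₀ ≠ (0 : X → ℝ) := by
  intro h
  have := congrFun h x₀
  simp [chi] at this

lemma one_sub_chi_ne_zero {X : Type*} {x₀ y : X} (hy : y ≠ x₀) :
    (1 : X → ℝ) - chi x₀ ≠ 0 := by
  intro h
  have := congrFun h y
  simp [chi, Set.indicator, hy] at this

lemma CF_chi (X : Type*) [TopologicalSpace X] (x₀ : X) : CF X (chi x₀) := by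
  refine ⟨{x₀}, Set.finite_singleton _, ?_⟩
  refine (continuousOn_const (c := (0:ℝ))).congr ?_
  intro x hx
  simp [chi, Set.indicator, Set.mem_compl_iff, Set.mem_singleton_iff] at hx ⊢
  exact hx

lemma CF_one_sub_chi (X : Type*) [TopologicalSpace X] (x₀ : X) :
    CF X (1 - chi x₀) := by
  refine ⟨{x₀}, Set.finite_singleton _, ?_⟩
  refine (continuousOn_const (c := (1:ℝ))).congr ?_
  intro x hx
  simp [chi, Set.indicator, Set.mem_compl_iff, Set.mem_singleton_iff] at hx ⊢
  exact hx

/-- `Γ(C(X)_F)` is not triangulated: for any `x₀ ∈ X`, the vertices `χ_{x₀}` and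
`1 - χ_{x₀}` are adjacent but have no common neighbour, so the edge between them
lies in no triangle. -/
theorem stmt18 {X : Type*} [TopologicalSpace X] [T1Space X]
    (h2 : ∃ x y : X, x ≠ y) (x₀ : X) :
    ∃ v w : Vtx X, v.1 = chi x₀ ∧ w.1 = 1 - chi x₀ ∧ (Γ X).Adj v w ∧
      ∀ h : Vtx X, ¬ ((Γ X).Adj h v ∧ (Γ X).Adj h w) := by
  obtain ⟨a, b, hab⟩ := h2
  have hy : ∃ y : X, y ≠ x₀ := by
    by_cases h : a = x₀
    · exact ⟨b, by rw [← h]; exact hab.symm⟩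
    · exact ⟨a, h⟩
  obtain ⟨y, hy⟩ := hy
  have hzd1 : ZD X (chi x₀) :=
    ⟨CF_chi X x₀, chi_ne_zero x₀, 1 - chi x₀, CF_one_sub_chi X x₀,
      one_sub_chi_ne_zero hy, chi_mul x₀⟩
  have hzd2 : ZD X (1 - chi x₀) :=
    ⟨CF_one_sub_chi X x₀, one_sub_chi_ne_zero hy, chi x₀, CF_chi X x₀,
      chi_ne_zero x₀, by rw [mul_comm]; exact chi_mul x₀⟩
  refine ⟨⟨chi x₀, hzd1⟩, ⟨1 - chi x₀, hzd2⟩, rfl, rfl, ⟨?_, chi_mul x₀⟩, ?_⟩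
  · intro h
    have h1 := congrArg Subtype.val h
    have := congrFun h1 x₀
    simp [chi] at this
  · rintro h ⟨⟨_, hv⟩, ⟨_, hw⟩⟩
    apply h.2.2.1
    have : h.1 * ((chi x₀) + (1 - chi x₀)) = 0 := by
      rw [mul_add, hv, hw, add_zero]
    simpa using this
end
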